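/- Thin higher homotopy groups are abelian: for n ≥ 2 and X a topological space with basepoint, the n-th thin loop group πₙ¹(X), defined as the quotient of based maps Sⁿ → X by thin homotopy, is an abelian group; the usual Eckmann–Hilton interchange homotopy between f·g and g·f can be realized by a homotopy whose image is contained in the union of the images of f and g (i.e. a thin homotopy). -/

import Mathlib

open Topology Topology.Homotopy
open scoped unitInterval

variable {X : Type*} [TopologicalSpace X] {x₀ : X}

/-- One step of thin homotopy between based `n`-loops: a homotopy rel boundary whose image
is contained in the union of the images of the two loops. -/
def ThinStep {N : Type*} (f g : Ω^ N X x₀) : Prop :=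
  ∃ H : ContinuousMap.HomotopyRel f.1 g.1 (Cube.boundary N),
    ∀ p : unitInterval × (I^ N), H p ∈ Set.range f.1 ∪ Set.range g.1

/-- Two based `n`-loops are *thin homotopic* if they are connected by a finite chain of
homotopies, each of whose image lies in the images of the maps involved. -/
def ThinHomotopicN {N : Type*} (f g : Ω^ N X x₀) : Prop :=
  ∃ (n : ℕ) (c : Fin (n + 1) → Ω^ N X x₀), c 0 = f ∧ c (Fin.last n) = g ∧
    ∀ i : Fin n, ThinStep (c i.castSucc) (c i.succ)

/-- The `n`-th thin loop space: based `n`-loops modulo thin homotopy. -/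
def ThinHomotopyGroup (n : ℕ) (X : Type*) [TopologicalSpace X] (x₀ : X) : Type _ :=
  Quot (@ThinHomotopicN X _ x₀ (Fin n))

/-!
Every thin homotopy needed is either a reparametrization `t ↦ F ∘ φₜ` of one loop `F` in a
single coordinate, whose image stays inside `range F`, or is assembled from such homotopies by
concatenation and reversal, which keep the image inside the union of the images involved.
The unit, inverse and associativity laws are reparametrizations. Commutativity is the
Eckmann–Hilton argument in a second coordinate `j ≠ i` (this is where `n ≥ 2` enters):
`f ⬝ᵢ g ~ (f ⬝ⱼ 1) ⬝ᵢ (1 ⬝ⱼ g) = (f ⬝ᵢ 1) ⬝ⱼ (1 ⬝ᵢ g)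
  ~ (1 ⬝ᵢ f) ⬝ⱼ (g ⬝ᵢ 1) = (1 ⬝ⱼ g) ⬝ᵢ (f ⬝ⱼ 1) ~ g ⬝ᵢ f`,
where the equalities are the interchange law and each `~` slides `f` and `g` past constant
loops, so that every stage stays inside `range f ∪ range g`.
-/

open Function Set GenLoop

namespace Cube

variable {N : Type*} [DecidableEq N]

theorem update_mem_boundary (y : I^ N) (i : N) {s : I} (hs : s = 0 ∨ s = 1) :
    update y i s ∈ boundary N :=
  ⟨i, by rwa [update_self]⟩

theorem update_mem_boundary_of_mem_boundary {y : I^ N} (hy : y ∈ boundary N) (i : N) {s : I}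
    (hs : y i = 0 ∨ y i = 1 → s = 0 ∨ s = 1) : update y i s ∈ boundary N := by
  obtain ⟨j, hj⟩ := hy
  obtain rfl | hji := eq_or_ne j i
  · exact update_mem_boundary y j (hs hj)
  · exact ⟨j, by rwa [update_of_ne hji]⟩

end Cube

namespace GenLoop

variable {N : Type*}

section Apply

variable [DecidableEq N]

theorem transAt_apply (i : N) (f g : Ω^ N X x₀) (y : I^ N) :
    transAt i f g y =
      if (y i : ℝ) ≤ 1 / 2 then f (update y i (projIcc 0 1 zero_le_one (2 * y i)))
      else g (update y i (projIcc 0 1 zero_le_one (2 * y i - 1))) :=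
  rfl

theorem symmAt_apply (i : N) (f : Ω^ N X x₀) (y : I^ N) :
    symmAt i f y = f (update y i (σ (y i))) := by
  change f (fun j => if j = i then σ (y i) else y j) = _
  congr 1
  ext1 j
  rw [update_apply]

theorem apply_update_projIcc_of_le (f : Ω^ N X x₀) (y : I^ N) (i : N) {r : ℝ} (h : r ≤ 0) :
    f (update y i (projIcc 0 1 zero_le_one r)) = x₀ :=
  GenLoop.boundary f _ (Cube.update_mem_boundary y i (.inl (projIcc_eq_zero.2 h)))

theorem apply_update_projIcc_of_ge (f : Ω^ N X x₀) (y : I^ N) (i : N) {r : ℝ} (h : 1 ≤ r) :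
    f (update y i (projIcc 0 1 zero_le_one r)) = x₀ :=
  GenLoop.boundary f _ (Cube.update_mem_boundary y i (.inr (projIcc_eq_one.2 h)))

theorem transAt_const_apply (i : N) (f : Ω^ N X x₀) (y : I^ N) :
    transAt i f const y = f (update y i (projIcc 0 1 zero_le_one (2 * y i))) := by
  rw [transAt_apply]
  split_ifs with h
  · rfl
  · exact (apply_update_projIcc_of_ge f y i (by linarith)).symm

theorem const_transAt_apply (i : N) (f : Ω^ N X x₀) (y : I^ N) :
    transAt i const f y = f (update y i (projIcc 0 1 zero_le_one (2 * y i - 1))) := by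
  rw [transAt_apply]
  split_ifs with h
  · exact (apply_update_projIcc_of_le f y i (by linarith)).symm
  · rfl

theorem transAt_update_projIcc_apply (i : N) (f g : Ω^ N X x₀) (y : I^ N) {r : ℝ}
    (hr : r ∈ Icc 0 1) :
    transAt i f g (update y i (projIcc 0 1 zero_le_one r)) =
      if r ≤ 1 / 2 then f (update y i (projIcc 0 1 zero_le_one (2 * r)))
      else g (update y i (projIcc 0 1 zero_le_one (2 * r - 1))) := by
  simp only [transAt_apply, update_self, update_idem, projIcc_of_mem _ hr]

theorem range_transAt (i : N) (f g : Ω^ N X x₀) :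
    range (transAt i f g) = range f ∪ range g := by
  refine Subset.antisymm ?_ (union_subset ?_ ?_)
  · rintro _ ⟨y, rfl⟩
    rw [transAt_apply]
    split_ifs
    exacts [.inl (mem_range_self _), .inr (mem_range_self _)]
  · rintro _ ⟨y, rfl⟩
    obtain ⟨hy₀, hy₁⟩ := (y i).2
    refine ⟨update y i (projIcc 0 1 zero_le_one (y i / 2)), ?_⟩
    rw [transAt_update_projIcc_apply i f g y ⟨by linarith, by linarith⟩, if_pos (by linarith),
      mul_div_cancel₀ _ two_ne_zero, projIcc_val, update_eq_self]
  · rintro _ ⟨y, rfl⟩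
    obtain ⟨hy₀, hy₁⟩ := (y i).2
    refine ⟨update y i (projIcc 0 1 zero_le_one ((y i + 1) / 2)), ?_⟩
    rw [transAt_update_projIcc_apply i f g y ⟨by linarith, by linarith⟩]
    split_ifs with h
    · have hy : y i = 0 := Subtype.ext (by simp only [Icc.coe_zero]; linarith)
      rw [apply_update_projIcc_of_ge f y i (by linarith)]
      exact (GenLoop.boundary g y ⟨i, .inl hy⟩).symm
    · rw [show 2 * ((y i + 1) / 2) - 1 = (y i : ℝ) by ring, projIcc_val, update_eq_self]

theorem range_symmAt (i : N) (f : Ω^ N X x₀) : range (symmAt i f) = range f := by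
  refine Subset.antisymm ?_ fun _ ⟨y, hy⟩ => ⟨update y i (σ (y i)), ?_⟩
  · rintro _ ⟨y, rfl⟩
    rw [symmAt_apply]
    exact mem_range_self _
  · rw [symmAt_apply, update_self, update_idem, unitInterval.symm_symm, update_eq_self, hy]

end Apply

def HomotopicWithin (S : Set X) (f g : Ω^ N X x₀) : Prop :=
  ∃ H : ContinuousMap.HomotopyRel f.1 g.1 (Cube.boundary N), ∀ p, H p ∈ S

theorem homotopyRel_apply_of_mem_boundary {f g : Ω^ N X x₀}
    (H : ContinuousMap.HomotopyRel f.1 g.1 (Cube.boundary N)) (t : I) {y : I^ N}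
    (hy : y ∈ Cube.boundary N) : H (t, y) = x₀ :=
  (H.eq_fst t hy).trans (GenLoop.boundary f y hy)

namespace HomotopicWithin

variable {S T : Set X} {f g h : Ω^ N X x₀}

theorem of_continuous (Φ : I × (I^ N) → X) (hΦ : Continuous Φ) (h₀ : ∀ y, Φ (0, y) = f y)
    (h₁ : ∀ y, Φ (1, y) = g y) (hΦx₀ : ∀ t, ∀ y ∈ Cube.boundary N, Φ (t, y) = x₀)
    (hΦS : ∀ p, Φ p ∈ S) : HomotopicWithin S f g :=
  ⟨{ toFun := Φ
     continuous_toFun := hΦ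
     map_zero_left := h₀
     map_one_left := h₁
     prop' := fun t y hy => by
       simp only [ContinuousMap.coe_mk, hΦx₀ t y hy]
       exact (GenLoop.boundary f y hy).symm }, hΦS⟩

theorem refl (f : Ω^ N X x₀) : HomotopicWithin (range f) f f :=
  ⟨.refl f.1 _, fun _ => mem_range_self _⟩

theorem mono (hfg : HomotopicWithin S f g) (hST : S ⊆ T) : HomotopicWithin T f g :=
  let ⟨H, hH⟩ := hfg
  ⟨H, fun p => hST (hH p)⟩

theorem symm (hfg : HomotopicWithin S f g) : HomotopicWithin S g f :=
  let ⟨H, hH⟩ := hfg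
  ⟨H.symm, fun _ => hH _⟩

theorem trans (hfg : HomotopicWithin S f g) (hgh : HomotopicWithin S g h) :
    HomotopicWithin S f h := by
  obtain ⟨H, hH⟩ := hfg
  obtain ⟨K, hK⟩ := hgh
  refine ⟨H.trans K, fun p => ?_⟩
  rw [ContinuousMap.HomotopyRel.trans_apply]
  split_ifs
  exacts [hH _, hK _]

theorem thinStep (hfg : HomotopicWithin S f g) (hS : S ⊆ range f ∪ range g) : ThinStep f g :=
  hfg.mono hS

variable [DecidableEq N]

theorem transAt (i : N) {f f' g g' : Ω^ N X x₀} (hf : HomotopicWithin S f f')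
    (hg : HomotopicWithin T g g') :
    HomotopicWithin (S ∪ T) (transAt i f g) (transAt i f' g') := by
  obtain ⟨H, hH⟩ := hf
  obtain ⟨K, hK⟩ := hg
  refine .of_continuous (fun p => if (p.2 i : ℝ) ≤ 1 / 2
      then H (p.1, update p.2 i (projIcc 0 1 zero_le_one (2 * p.2 i)))
      else K (p.1, update p.2 i (projIcc 0 1 zero_le_one (2 * p.2 i - 1)))) ?_
    (fun y => by simp [transAt_apply]) (fun y => by simp [transAt_apply]) (fun t y hy => ?_)
    (fun p => by split_ifs; exacts [.inl (hH _), .inr (hK _)])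
  · refine Continuous.if_le ?_ ?_ (by fun_prop) continuous_const fun p hp => ?_
    · exact H.continuous.comp (continuous_fst.prodMk (continuous_snd.update i
        (continuous_projIcc.comp (by fun_prop))))
    · exact K.continuous.comp (continuous_fst.prodMk (continuous_snd.update i
        (continuous_projIcc.comp (by fun_prop))))
    · rw [homotopyRel_apply_of_mem_boundary H _
          (Cube.update_mem_boundary _ i (.inr (by simp [hp]))),
        homotopyRel_apply_of_mem_boundary K _
          (Cube.update_mem_boundary _ i (.inl (by simp [hp])))]
  · split_ifs
    · exact homotopyRel_apply_of_mem_boundary H _ (Cube.update_mem_boundary_of_mem_boundary hy i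
        (by rintro (h | h) <;> simp [h]))
    · exact homotopyRel_apply_of_mem_boundary K _ (Cube.update_mem_boundary_of_mem_boundary hy i
        (by rintro (h | h) <;> norm_num [h]))

theorem symmAt (i : N) (hfg : HomotopicWithin S f g) :
    HomotopicWithin S (symmAt i f) (symmAt i g) := by
  obtain ⟨H, hH⟩ := hfg
  refine .of_continuous (fun p => H (p.1, update p.2 i (σ (p.2 i)))) (by fun_prop)
    (fun y => (H.apply_zero _).trans (symmAt_apply i f y).symm)
    (fun y => (H.apply_one _).trans (symmAt_apply i g y).symm)
    (fun t y hy => homotopyRel_apply_of_mem_boundary H t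
      (Cube.update_mem_boundary_of_mem_boundary hy i (by rintro (h | h) <;> simp [h])))
    (fun _ => hH _)

end HomotopicWithin

section Reparametrization

variable [DecidableEq N]

theorem homotopicWithin_of_reparam (F : Ω^ N X x₀) (i : N) {f g : Ω^ N X x₀}
    (E : ℝ → ℝ → ℝ) (hE : Continuous fun p : ℝ × ℝ => E p.1 p.2)
    (hE₀ : ∀ t : I, E t 0 ≤ 0 ∨ 1 ≤ E t 0) (hE₁ : ∀ t : I, E t 1 ≤ 0 ∨ 1 ≤ E t 1)
    (hf : ∀ y, f y = F (update y i (projIcc 0 1 zero_le_one (E 0 (y i)))))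
    (hg : ∀ y, g y = F (update y i (projIcc 0 1 zero_le_one (E 1 (y i))))) :
    HomotopicWithin (range F) f g := by
  refine .of_continuous (fun p => F (update p.2 i (projIcc 0 1 zero_le_one (E p.1 (p.2 i)))))
    ?_ (fun y => by simpa using (hf y).symm) (fun y => by simpa using (hg y).symm)
    (fun t y hy => GenLoop.boundary F _ (Cube.update_mem_boundary_of_mem_boundary hy i ?_))
    (fun _ => mem_range_self _)
  · exact F.1.continuous.comp <| continuous_snd.update i <| continuous_projIcc.comp <|
      hE.comp (f := fun p : I × (I^ N) => ((p.1 : ℝ), (p.2 i : ℝ))) (by fun_prop)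
  · rintro (hy | hy) <;> simp only [hy]
    exacts [by simpa using hE₀ t, by simpa using hE₁ t]

theorem transAt_const_homotopicWithin (i : N) (f : Ω^ N X x₀) :
    HomotopicWithin (range f) (transAt i f const) f :=
  homotopicWithin_of_reparam f i (fun t s => (2 - t) * s) (by fun_prop) (fun _ => by simp)
    (fun t => .inr (by linarith [t.2.2])) (fun y => by norm_num [transAt_const_apply])
    (fun y => by norm_num)

theorem const_transAt_homotopicWithin (i : N) (f : Ω^ N X x₀) :
    HomotopicWithin (range f) (transAt i const f) f :=
  homotopicWithin_of_reparam f i (fun t s => (2 - t) * s - (1 - t)) (by fun_prop)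
    (fun t => .inl (by linarith [t.2.2])) (fun _ => by norm_num)
    (fun y => by norm_num [const_transAt_apply]) (fun y => by norm_num)

theorem transAt_const_homotopicWithin_const_transAt (i : N) (f : Ω^ N X x₀) :
    HomotopicWithin (range f) (transAt i f const) (transAt i const f) :=
  homotopicWithin_of_reparam f i (fun t s => 2 * s - t) (by fun_prop)
    (fun t => .inl (by linarith [t.2.1])) (fun t => .inr (by linarith [t.2.2]))
    (fun y => by norm_num [transAt_const_apply]) (fun y => by norm_num [const_transAt_apply])

theorem symmAt_transAt_homotopicWithin_const (i : N) (f : Ω^ N X x₀) :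
    HomotopicWithin (range f) (transAt i (symmAt i f) f) const := by
  refine homotopicWithin_of_reparam f i (fun t s => (1 - t) * |2 * s - 1| + t) (by fun_prop)
    (fun _ => .inr (by norm_num)) (fun _ => .inr (by norm_num)) (fun y => ?_)
    (fun y => (apply_update_projIcc_of_ge f y i (by norm_num)).symm)
  rw [transAt_apply]
  split_ifs with hy
  · rw [symmAt_apply, update_self, update_idem, unitInterval.symm_projIcc,
      abs_of_nonpos (by linarith)]
    norm_num
  · rw [abs_of_pos (by linarith)]
    norm_num

theorem transAt_symmAt_homotopicWithin_const (i : N) (f : Ω^ N X x₀) :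
    HomotopicWithin (range f) (transAt i f (symmAt i f)) const := by
  refine homotopicWithin_of_reparam f i (fun t s => (1 - t) * (1 - |2 * s - 1|)) (by fun_prop)
    (fun _ => .inl (by norm_num)) (fun _ => .inl (by norm_num)) (fun y => ?_)
    (fun y => (apply_update_projIcc_of_le f y i (by norm_num)).symm)
  rw [transAt_apply]
  split_ifs with hy
  · rw [abs_of_nonpos (by linarith)]
    norm_num
  · rw [symmAt_apply, update_self, update_idem, unitInterval.symm_projIcc,
      abs_of_pos (by linarith)]
    norm_num

/-- `s ↦ min (2s) (s + 1/4) (s/2 + 1/2)` maps the thirds `[0, 1/4]`, `[1/4, 1/2]`, `[1/2, 1]` of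
`(f ⬝ g) ⬝ h` linearly onto those `[0, 1/2]`, `[1/2, 3/4]`, `[3/4, 1]` of `f ⬝ (g ⬝ h)`. -/
theorem transAt_assoc_homotopicWithin (i : N) (f g h : Ω^ N X x₀) :
    HomotopicWithin (range (transAt i f (transAt i g h)))
      (transAt i (transAt i f g) h) (transAt i f (transAt i g h)) := by
  refine homotopicWithin_of_reparam _ i
    (fun t s => (1 - t) * min (2 * s) (min (s + 1 / 4) (s / 2 + 1 / 2)) + t * s) (by fun_prop)
    (fun _ => .inl (by norm_num)) (fun _ => .inr (by norm_num)) (fun y => ?_)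
    (fun y => by norm_num)
  have ev (F G : Ω^ N X x₀) (r : ℝ) (h₀ : 0 ≤ r) (h₁ : r ≤ 1) :=
    transAt_update_projIcc_apply i F G y ⟨h₀, h₁⟩
  conv_lhs => rw [← update_eq_self i y, ← projIcc_val zero_le_one (y i)]
  obtain ⟨hs₀, hs₁⟩ := (y i).2
  rw [ev _ _ _ hs₀ hs₁]
  simp only [sub_zero, one_mul, zero_mul, add_zero]
  set s : ℝ := (y i : ℝ)
  rcases le_or_gt s (1 / 4) with hs | hs
  · rw [min_eq_left (le_min (by linarith) (by linarith))]
    simp only [ev _ _ (2 * s) (by linarith) (by linarith), if_pos (by linarith : s ≤ 1 / 2),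
      if_pos (by linarith : 2 * s ≤ 1 / 2)]
  rcases le_or_gt s (1 / 2) with hs' | hs'
  · rw [min_eq_right (min_le_of_left_le (by linarith)), min_eq_left (by linarith)]
    simp only [ev _ _ (2 * s) (by linarith) (by linarith),
      ev _ _ (s + 1 / 4) (by linarith) (by linarith),
      ev _ _ (2 * (s + 1 / 4) - 1) (by linarith) (by linarith), if_pos hs',
      if_neg (by linarith : ¬2 * s ≤ 1 / 2), if_neg (by linarith : ¬s + 1 / 4 ≤ 1 / 2),
      if_pos (by linarith : 2 * (s + 1 / 4) - 1 ≤ 1 / 2)]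
    ring_nf
  · rw [min_eq_right (min_le_of_right_le (by linarith)), min_eq_right (by linarith)]
    simp only [ev _ _ (s / 2 + 1 / 2) (by linarith) (by linarith),
      ev _ _ (2 * (s / 2 + 1 / 2) - 1) (by linarith) (by linarith),
      if_neg (by linarith : ¬s ≤ 1 / 2), if_neg (by linarith : ¬s / 2 + 1 / 2 ≤ 1 / 2),
      if_neg (by linarith : ¬2 * (s / 2 + 1 / 2) - 1 ≤ 1 / 2)]
    ring_nf

end Reparametrization

theorem transAt_comm_homotopicWithin [DecidableEq N] {i j : N} (hij : i ≠ j)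
    (f g : Ω^ N X x₀) :
    HomotopicWithin (range f ∪ range g) (transAt i f g) (transAt i g f) := by
  have h₁ := (transAt_const_homotopicWithin j f).symm.transAt i
    (const_transAt_homotopicWithin j g).symm
  have h₂ := (transAt_const_homotopicWithin_const_transAt i f).transAt j
    (transAt_const_homotopicWithin_const_transAt i g).symm
  have h₃ := (const_transAt_homotopicWithin j g).transAt i (transAt_const_homotopicWithin j f)
  rw [transAt_distrib hij] at h₁ h₃
  rw [union_comm] at h₃
  exact h₁.trans (h₂.trans h₃)

end GenLoop

section ThinHomotopicN

variable {Y : Type*} [TopologicalSpace Y] {y₀ : Y} {M N : Type*}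

theorem ThinStep.homotopicWithin {f g : Ω^ N X x₀} (h : ThinStep f g) :
    HomotopicWithin (range f ∪ range g) f g :=
  h

theorem ThinStep.thinHomotopicN {f g : Ω^ N X x₀} (h : ThinStep f g) : ThinHomotopicN f g :=
  ⟨1, ![f, g], rfl, rfl, fun k => by fin_cases k; exact h⟩

theorem GenLoop.HomotopicWithin.thinHomotopicN {S : Set X} {f g : Ω^ N X x₀}
    (h : HomotopicWithin S f g) (hS : S ⊆ range f ∪ range g) : ThinHomotopicN f g :=
  (h.thinStep hS).thinHomotopicN

theorem ThinHomotopicN.map {Φ : Ω^ N X x₀ → Ω^ M Y y₀}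
    (hΦ : ∀ f g, ThinStep f g → ThinStep (Φ f) (Φ g)) {f g : Ω^ N X x₀}
    (h : ThinHomotopicN f g) : ThinHomotopicN (Φ f) (Φ g) :=
  let ⟨n, c, hc₀, hcₙ, hc⟩ := h
  ⟨n, Φ ∘ c, by simp [hc₀], by simp [hcₙ], fun k => hΦ _ _ (hc k)⟩

variable [DecidableEq N] (i : N) {f f' g g' : Ω^ N X x₀}

theorem ThinHomotopicN.transAt_left (h : ThinHomotopicN f f') (g : Ω^ N X x₀) :
    ThinHomotopicN (transAt i f g) (transAt i f' g) :=
  h.map fun a b hab => (hab.homotopicWithin.transAt i (.refl g)).thinStep <| by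
    rw [range_transAt, range_transAt, union_union_distrib_right]

theorem ThinHomotopicN.transAt_right (f : Ω^ N X x₀) (h : ThinHomotopicN g g') :
    ThinHomotopicN (transAt i f g) (transAt i f g') :=
  h.map fun a b hab => ((HomotopicWithin.refl f).transAt i hab.homotopicWithin).thinStep <| by
    rw [range_transAt, range_transAt, union_union_distrib_left]

theorem ThinHomotopicN.symmAt (h : ThinHomotopicN f g) :
    ThinHomotopicN (symmAt i f) (symmAt i g) :=
  h.map fun a b hab => (hab.homotopicWithin.symmAt i).thinStep <| by
    rw [range_symmAt, range_symmAt]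

end ThinHomotopicN

/-- For `n ≥ 2`, the `n`-th thin loop group `πₙ¹(X)` is an abelian group (with product
induced by concatenation of `n`-loops); moreover the Eckmann–Hilton interchange homotopy
between `f·g` and `g·f` can be realized by a thin homotopy, i.e. one whose image is
contained in the union of the images of `f` and `g`. -/
theorem thinHomotopyGroup_comm (n : ℕ) (hn : 2 ≤ n) (X : Type*) [TopologicalSpace X]
    (x₀ : X) (i : Fin n) :
    (∃ (mul : ThinHomotopyGroup n X x₀ → ThinHomotopyGroup n X x₀ → ThinHomotopyGroup n X x₀)
      (one : ThinHomotopyGroup n X x₀)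
      (inv : ThinHomotopyGroup n X x₀ → ThinHomotopyGroup n X x₀),
      (∀ f g : Ω^ (Fin n) X x₀,
        mul (Quot.mk _ f) (Quot.mk _ g) = Quot.mk _ (GenLoop.transAt i f g)) ∧
      (one = Quot.mk _ (GenLoop.const)) ∧
      (∀ a b c, mul (mul a b) c = mul a (mul b c)) ∧
      (∀ a, mul one a = a) ∧ (∀ a, mul a one = a) ∧
      (∀ a, mul (inv a) a = one) ∧ (∀ a, mul a (inv a) = one) ∧
      (∀ a b, mul a b = mul b a)) ∧
    (∀ f g : Ω^ (Fin n) X x₀,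
      ∃ H : ContinuousMap.HomotopyRel (GenLoop.transAt i f g).1 (GenLoop.transAt i g f).1
          (Cube.boundary (Fin n)),
        ∀ p : unitInterval × (I^ (Fin n)), H p ∈ Set.range f.1 ∪ Set.range g.1) := by
  have : Nontrivial (Fin n) := Fin.nontrivial_iff_two_le.2 hn
  obtain ⟨j, hji⟩ := exists_ne i
  refine ⟨⟨Quot.map₂ (transAt i) (fun f _ _ h => h.transAt_right i f)
      (fun _ _ g h => h.transAt_left i g), Quot.mk _ GenLoop.const,
      Quot.map (symmAt i) (fun _ _ h => h.symmAt i), fun _ _ => rfl, rfl, ?_, ?_, ?_, ?_, ?_, ?_⟩,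
    transAt_comm_homotopicWithin hji.symm⟩
  · rintro ⟨f⟩ ⟨g⟩ ⟨h⟩
    exact Quot.sound ((transAt_assoc_homotopicWithin i f g h).thinHomotopicN subset_union_right)
  · rintro ⟨f⟩
    exact Quot.sound ((const_transAt_homotopicWithin i f).thinHomotopicN subset_union_right)
  · rintro ⟨f⟩
    exact Quot.sound ((transAt_const_homotopicWithin i f).thinHomotopicN subset_union_right)
  · rintro ⟨f⟩
    exact Quot.sound ((symmAt_transAt_homotopicWithin_const i f).thinHomotopicN
      (by simp [range_transAt, range_symmAt]))
  · rintro ⟨f⟩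
    exact Quot.sound ((transAt_symmAt_homotopicWithin_const i f).thinHomotopicN
      (by simp [range_transAt, range_symmAt]))
  · rintro ⟨f⟩ ⟨g⟩
    exact Quot.sound ((transAt_comm_homotopicWithin hji.symm f g).thinHomotopicN
      (by rw [range_transAt]; exact subset_union_left))
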